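/- arXiv:2402.10049 — 5 statements merged into one kernel-verified Lean document; each statement's English description precedes it below -/
import Mathlib

section
/- Let R be a commutative ℚ-algebra, c ∈ R, and let g ∈ R⟦X⟧ be an odd formal power series with coefficient 1 in degree 1. Set a = 3·(coefficient of X³ in g). Suppose that in the two-variable formal power series ring R⟦y,z⟧ the identity 2c·g(y+z)²·g(y)³·g(z)³ + 2·g'(z)·g(y)³ + 2·g'(y)·g(z)³ = g(y+z)·( −g''(z)·g(y)²·g(z) − g''(y)·g(z)²·g(y) + 2·g'(z)²·g(y)² + 2·g'(y)²·g(z)² − 2·g'(y)·g'(z)·g(y)·g(z) ) holds, where g(y), g(z), g(y+z), g'(y), g'(z), g''(y), g''(z) denote substitution of the indicated series (which have zero constant term) into g and its formal derivatives. Then c = 0 and there exists ε ∈ R such that (g')² = 1 + 2a·g² + ε·g⁴ in R⟦X⟧. -/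
/-!
Under `R⟦y,z⟧ ≃ R⟦y⟧⟦z⟧` the series `g(y+z)` becomes the Taylor series `∑ zⁿ g⁽ⁿ⁾(y) / n!`, so the
coefficient of `z³` in the identity is a third-order differential equation for `g`. Its part that
is odd under `X ↦ -X` is `12 c g⁵`, whence `c = 0`. The remaining equation says that
`D = g'' g - 2 g'² + 2 + 2a g²` satisfies `D' g = 3 g' D`, and then `F = g'² - 1 - 2a g² - ε g⁴`
satisfies `F' g = 4 g' F`. Since `g = X + O(X²)`, the solutions of `u' g = k g' u` are the multiples
of `g ^ k`, so `D` and `F` vanish as soon as their coefficients of `X³` (zero by parity) and of `X⁴`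
(zero by the choice of `ε`) do.
-/

open PowerSeries

/-- Formal substitution of a multivariate power series `h` (assumed to have zero
constant term) into a one-variable power series `g`: the coefficient of a monomial `d`
in `g(h)` only involves the powers `h ^ k` for `k` at most the total degree of `d`,
since `h ^ k` has order at least `k`. -/
noncomputable def PowerSeries.substMv {R : Type*} [CommSemiring R] {σ : Type*}
    (h : MvPowerSeries σ R) (g : PowerSeries R) : MvPowerSeries σ R :=
  fun d => ∑ k ∈ Finset.range ((d.sum fun _ n => n) + 1),
    PowerSeries.coeff (R := R) k g * MvPowerSeries.coeff (R := R) d (h ^ k)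

namespace PowerSeries

variable {S : Type*} [CommRing S]

theorem coeff_evalNegHom (f : S⟦X⟧) (n : ℕ) : coeff n (evalNegHom f) = (-1) ^ n * coeff n f :=
  coeff_rescale f (-1) n

theorem derivative_evalNegHom (f : S⟦X⟧) : d⁄dX S (evalNegHom f) = -evalNegHom (d⁄dX S f) := by
  ext n
  simp only [coeff_derivative, coeff_evalNegHom, map_neg, pow_succ]
  ring

theorem evalNegHom_C (r : S) : evalNegHom (C r) = C r := by
  ext n
  rw [coeff_evalNegHom, coeff_C]
  split_ifs with hn <;> simp [hn]

theorem evalNegHom_derivative_of_eq_neg {f : S⟦X⟧} (hf : evalNegHom f = -f) :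
    evalNegHom (d⁄dX S f) = d⁄dX S f := by
  rw [← neg_neg (evalNegHom _), ← derivative_evalNegHom, hf, map_neg, neg_neg]

theorem evalNegHom_derivative_of_eq {f : S⟦X⟧} (hf : evalNegHom f = f) :
    evalNegHom (d⁄dX S f) = -d⁄dX S f := by
  rw [← neg_neg (evalNegHom _), ← derivative_evalNegHom, hf]

theorem evalNegHom_eq_neg {f : S⟦X⟧} (hf : ∀ n, Even n → coeff n f = 0) : evalNegHom f = -f := by
  ext n
  rw [coeff_evalNegHom, map_neg]
  rcases Nat.even_or_odd n with hn | hn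
  · simp [hf n hn]
  · simp [hn.neg_one_pow]

theorem coeff_eq_zero_of_evalNegHom_eq [IsAddTorsionFree S] {f : S⟦X⟧} (hf : evalNegHom f = f)
    {n : ℕ} (hn : Odd n) : coeff n f = 0 := by
  have h := congrArg (coeff n) hf
  rw [coeff_evalNegHom, hn.neg_one_pow, neg_one_mul, neg_eq_iff_add_eq_zero, ← two_nsmul] at h
  exact (smul_eq_zero.mp h).resolve_left two_ne_zero

theorem coeff_pow_self {f : S⟦X⟧} (hf : coeff 0 f = 0) (n : ℕ) :
    coeff n (f ^ n) = coeff 1 f ^ n := by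
  obtain ⟨h, rfl⟩ := (X_dvd_iff (φ := f)).mpr (by rwa [← coeff_zero_eq_constantCoeff_apply])
  rw [mul_pow, coeff_X_pow_mul', if_pos le_rfl, Nat.sub_self, coeff_zero_eq_constantCoeff_apply,
    map_pow, ← coeff_zero_eq_constantCoeff_apply, coeff_succ_X_mul]

theorem derivative_ofNat (n : ℕ) [n.AtLeastTwo] : d⁄dX S (ofNat(n) : S⟦X⟧) = 0 :=
  Derivation.map_natCast (d⁄dX S) n

theorem X_mul_derivative_X_pow_mul (n : ℕ) (v : S⟦X⟧) :
    X * d⁄dX S (X ^ n * v) = X ^ n * ((n : S⟦X⟧) * v + X * d⁄dX S v) := by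
  rw [Derivation.leibniz, derivative_pow, derivative_X, smul_eq_mul, smul_eq_mul]
  cases n with
  | zero => simp
  | succ n =>
    simp only [Nat.cast_add, Nat.cast_one, add_tsub_cancel_right]
    ring

theorem coeff_derivative_mul_sub_natCast_mul {g u : S⟦X⟧} {n : ℕ} (k : ℕ) (hg : coeff 0 g = 0)
    (hu : ∀ j < n, coeff j u = 0) :
    coeff n (d⁄dX S u * g - (k : S⟦X⟧) * (d⁄dX S g * u)) =
      ((n : S) - k) * coeff 1 g * coeff n u := by
  obtain ⟨v, rfl⟩ := X_pow_dvd_iff.mpr hu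
  obtain ⟨h, rfl⟩ := (X_dvd_iff (φ := g)).mpr (by rwa [← coeff_zero_eq_constantCoeff_apply])
  have hX : d⁄dX S (X * h) = h + X * d⁄dX S h := by
    rw [Derivation.leibniz, derivative_X, smul_eq_mul, smul_eq_mul, mul_one, add_comm]
  have key : d⁄dX S (X ^ n * v) * (X * h) - (k : S⟦X⟧) * (d⁄dX S (X * h) * (X ^ n * v)) =
      X ^ n * ((n - k : S⟦X⟧) * v * h + X * (d⁄dX S v * h - (k : S⟦X⟧) * d⁄dX S h * v)) := by
    linear_combination (h : S⟦X⟧) * X_mul_derivative_X_pow_mul n v - (k : S⟦X⟧) * X ^ n * v * hX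
  rw [key, coeff_X_pow_mul', if_pos le_rfl, Nat.sub_self, coeff_X_pow_mul', if_pos le_rfl,
    Nat.sub_self, coeff_succ_X_mul]
  simp [coeff_zero_eq_constantCoeff_apply]
  ring

theorem eq_zero_of_derivative_mul_eq [IsAddTorsionFree S] {g u : S⟦X⟧} {k : ℕ}
    (hg0 : coeff 0 g = 0) (hg1 : coeff 1 g = 1) (hu : coeff k u = 0)
    (h : d⁄dX S u * g = k * (d⁄dX S g * u)) : u = 0 := by
  ext n
  rw [map_zero]
  induction n using Nat.strong_induction_on with
  | _ n ih =>
    rcases eq_or_ne n k with rfl | hnk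
    · exact hu
    have hcoeff := coeff_derivative_mul_sub_natCast_mul k hg0 ih
    rw [h, sub_self, map_zero, hg1, mul_one, ← Int.cast_natCast, ← Int.cast_natCast k,
      ← Int.cast_sub, ← zsmul_eq_mul, eq_comm] at hcoeff
    exact (smul_eq_zero.mp hcoeff).resolve_left (sub_ne_zero.mpr (by exact_mod_cast hnk))

theorem coeff_zero_mul_eq (f h : S⟦X⟧) : coeff 0 (f * h) = coeff 0 f * coeff 0 h := by
  simp [coeff_mul]

theorem coeff_one_mul_eq (f h : S⟦X⟧) :
    coeff 1 (f * h) = coeff 0 f * coeff 1 h + coeff 1 f * coeff 0 h := by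
  simp [coeff_mul, Finset.Nat.antidiagonal_succ]

theorem coeff_two_mul_eq (f h : S⟦X⟧) :
    coeff 2 (f * h) = coeff 0 f * coeff 2 h + coeff 1 f * coeff 1 h + coeff 2 f * coeff 0 h := by
  simp [coeff_mul, Finset.Nat.antidiagonal_succ, add_assoc]

theorem coeff_three_mul_eq (f h : S⟦X⟧) :
    coeff 3 (f * h) = coeff 0 f * coeff 3 h + coeff 1 f * coeff 2 h + coeff 2 f * coeff 1 h
      + coeff 3 f * coeff 0 h := by
  simp [coeff_mul, Finset.Nat.antidiagonal_succ, add_assoc]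

end PowerSeries

namespace MvPowerSeries

open Finsupp

variable (R : Type*) [CommRing R]

noncomputable def finTwoEquiv : MvPowerSeries (Fin 2) R ≃ₐ[R] R⟦X⟧⟦X⟧ :=
  (renameEquiv R (finSuccEquivLast.trans (Equiv.optionCongr (Equiv.equivPUnit (Fin 1))))).trans
    (optionEquivLeft Unit R)

variable {R}

theorem coeff_coeff_finTwoEquiv (f : MvPowerSeries (Fin 2) R) (m n : ℕ) :
    PowerSeries.coeff m (PowerSeries.coeff n (finTwoEquiv R f)) =
      coeff (single 0 m + single 1 n) f := by
  set e : Fin 2 ≃ Option Unit :=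
    finSuccEquivLast.trans (Equiv.optionCongr (Equiv.equivPUnit (Fin 1)))
  have he : (single () m).optionElim n = embDomain e.toEmbedding (single 0 m + single 1 n) := by
    ext (_ | _) <;> simp [e, embDomain_eq_mapDomain, mapDomain_add,
      show finSuccEquivLast (0 : Fin 2) = some 0 from rfl,
      show finSuccEquivLast (1 : Fin 2) = none from rfl]
  show coeff (single () m) (PowerSeries.coeff n (optionEquivLeft Unit R (renameEquiv R e f))) = _
  rw [coeff_coeff_optionEquivLeft, he]
  exact coeff_embDomain_rename e.toEmbedding f _

@[simp] theorem finTwoEquiv_X_zero : finTwoEquiv R (X 0) = PowerSeries.C PowerSeries.X := by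
  simp [finTwoEquiv, show finSuccEquivLast (0 : Fin 2) = some 0 from rfl]
  rfl

@[simp] theorem finTwoEquiv_X_one : finTwoEquiv R (X 1) = PowerSeries.X := by
  simp [finTwoEquiv, show finSuccEquivLast (1 : Fin 2) = none from rfl]

@[simp] theorem finTwoEquiv_C (r : R) :
    finTwoEquiv R (C r) = PowerSeries.C (PowerSeries.C r) := by
  simp [finTwoEquiv]
  rfl

end MvPowerSeries

namespace PowerSeries

open MvPowerSeries (finTwoEquiv coeff_coeff_finTwoEquiv)
open Finsupp (single)
open scoped Nat

variable {R : Type*} [CommRing R]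

theorem coeff_coeff_finTwoEquiv_substMv (h : MvPowerSeries (Fin 2) R) (f : R⟦X⟧) (m n : ℕ) :
    coeff m (coeff n (finTwoEquiv R (substMv h f))) =
      ∑ k ∈ Finset.range (m + n + 1), coeff k f * coeff m (coeff n (finTwoEquiv R h ^ k)) := by
  have hdeg : ((single (0 : Fin 2) m + single 1 n).sum fun _ k => k) = m + n := by
    rw [Finsupp.sum_add_index' (fun _ => rfl) (fun _ _ _ => rfl), Finsupp.sum_single_index rfl,
      Finsupp.sum_single_index rfl]
  simp_rw [← map_pow, coeff_coeff_finTwoEquiv, ← hdeg]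
  rfl

theorem finTwoEquiv_substMv_X_zero (f : R⟦X⟧) :
    finTwoEquiv R (substMv (MvPowerSeries.X 0) f) = C f := by
  ext n m
  simp only [coeff_coeff_finTwoEquiv_substMv, MvPowerSeries.finTwoEquiv_X_zero, ← map_pow, coeff_C]
  split_ifs with hn
  · simp [coeff_X_pow, hn]
  · simp

theorem finTwoEquiv_substMv_X_one (f : R⟦X⟧) :
    finTwoEquiv R (substMv (MvPowerSeries.X 1) f) = map C f := by
  ext n m
  simp [coeff_coeff_finTwoEquiv_substMv, coeff_C, coeff_X_pow, apply_ite (coeff m), coeff_one]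

theorem coeff_coeff_finTwoEquiv_substMv_X_add_X (f : R⟦X⟧) (m n : ℕ) :
    coeff m (coeff n (finTwoEquiv R (substMv (MvPowerSeries.X 0 + MvPowerSeries.X 1) f))) =
      (m + n).choose n * coeff (m + n) f := by
  have hpow (k : ℕ) :
      (C X + X : R⟦X⟧⟦X⟧) ^ k = ((Polynomial.X + Polynomial.C X) ^ k : Polynomial R⟦X⟧) := by
    push_cast [Polynomial.coe_X, Polynomial.coe_C]
    ring
  simp only [coeff_coeff_finTwoEquiv_substMv, map_add, MvPowerSeries.finTwoEquiv_X_zero,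
    MvPowerSeries.finTwoEquiv_X_one, hpow, Polynomial.coeff_coe, Polynomial.coeff_X_add_C_pow,
    ← map_natCast (C (R := R)), coeff_mul_C, coeff_X_pow]
  rw [Finset.sum_eq_single (m + n)]
  · simp [mul_comm]
  · intro k _ hk
    rcases lt_or_ge k n with hkn | hkn
    · simp [Nat.choose_eq_zero_of_lt hkn]
    · rw [if_neg (by omega)]
      simp
  · simp

theorem factorial_mul_coeff_finTwoEquiv_substMv_X_add_X (f : R⟦X⟧) (n : ℕ) :
    (n ! : R⟦X⟧) * coeff n (finTwoEquiv R (substMv (MvPowerSeries.X 0 + MvPowerSeries.X 1) f)) =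
      (d⁄dX R)^[n] f := by
  ext m
  rw [← map_natCast (C (R := R)), coeff_C_mul, coeff_coeff_finTwoEquiv_substMv_X_add_X,
    coeff_iterate_derivative, Nat.ascFactorial_eq_factorial_mul_choose]
  push_cast
  ring

def RigidityEquation (c : R) (g : R⟦X⟧) : Prop :=
  letI Y : MvPowerSeries (Fin 2) R := MvPowerSeries.X 0
  letI Z : MvPowerSeries (Fin 2) R := MvPowerSeries.X 1
  2 * MvPowerSeries.C (σ := Fin 2) (R := R) c * (substMv (Y + Z) g) ^ 2 * (substMv Y g) ^ 3
        * (substMv Z g) ^ 3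
      + 2 * substMv Z (d⁄dX R g) * (substMv Y g) ^ 3
      + 2 * substMv Y (d⁄dX R g) * (substMv Z g) ^ 3
    = substMv (Y + Z) g *
        (-(substMv Z (d⁄dX R (d⁄dX R g)) * (substMv Y g) ^ 2 * substMv Z g)
          - substMv Y (d⁄dX R (d⁄dX R g)) * (substMv Z g) ^ 2 * substMv Y g
          + 2 * (substMv Z (d⁄dX R g)) ^ 2 * (substMv Y g) ^ 2
          + 2 * (substMv Y (d⁄dX R g)) ^ 2 * (substMv Z g) ^ 2
          - 2 * substMv Y (d⁄dX R g) * substMv Z (d⁄dX R g)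
              * substMv Y g * substMv Z g)

theorem RigidityEquation.ode {c : R} {g : R⟦X⟧} (hodd : ∀ n, Even n → coeff n g = 0)
    (h1 : coeff 1 g = 1) (h : RigidityEquation c g) :
    6 * C c * g ^ 5 + 6 * d⁄dX R g =
      -6 * C (coeff 3 g) * d⁄dX R g * g ^ 2 - 6 * d⁄dX R (d⁄dX R g) * d⁄dX R g * g
        + 6 * d⁄dX R g ^ 3 + d⁄dX R (d⁄dX R (d⁄dX R g)) * g ^ 2 := by
  have hE := congrArg (fun F => coeff 3 (finTwoEquiv R F)) h
  simp only [map_add, map_mul, map_sub, map_neg, map_pow, map_ofNat,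
    finTwoEquiv_substMv_X_zero, finTwoEquiv_substMv_X_one, MvPowerSeries.finTwoEquiv_C] at hE
  have hT (n : ℕ) := factorial_mul_coeff_finTwoEquiv_substMv_X_add_X g n
  set T := finTwoEquiv R (substMv (MvPowerSeries.X 0 + MvPowerSeries.X 1) g)
  have hT0 : coeff 0 T = g := by simpa using hT 0
  have hT1 : coeff 1 T = d⁄dX R g := by simpa using hT 1
  have hT2 : 2 * coeff 2 T = d⁄dX R (d⁄dX R g) := by simpa using hT 2
  have hT3 : 6 * coeff 3 T = d⁄dX R (d⁄dX R (d⁄dX R g)) := by simpa [Nat.factorial] using hT 3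
  -- numerals become constants `C n`, whose coefficients `coeff_C` computes
  simp only [← map_ofNat C, pow_succ, pow_zero, one_mul, map_add, map_neg, map_sub,
    coeff_three_mul_eq, coeff_two_mul_eq, coeff_one_mul_eq, coeff_zero_mul_eq, coeff_map, coeff_C,
    coeff_derivative, hT0, hT1, h1, hodd 0 (by decide), hodd 2 (by decide),
    hodd 4 (by decide)] at hE
  norm_num at hE
  rw [map_ofNat C 2, map_ofNat C 3] at hE
  linear_combination 3 * hE - 3 * d⁄dX R g * g * hT2 + g ^ 2 * hT3

variable [IsAddTorsionFree R]

theorem RigidityEquation.const_eq_zero {c : R} {g : R⟦X⟧} (hodd : ∀ n, Even n → coeff n g = 0)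
    (h1 : coeff 1 g = 1) (h : RigidityEquation c g) : c = 0 := by
  have hode := h.ode hodd h1
  have hg := evalNegHom_eq_neg hodd
  have hg' := evalNegHom_derivative_of_eq_neg hg
  have hg'' := evalNegHom_derivative_of_eq hg'
  have hg''' := evalNegHom_derivative_of_eq_neg hg''
  have hode' := congrArg evalNegHom hode
  simp only [map_add, map_sub, map_mul, map_pow, map_neg, map_ofNat, evalNegHom_C, hg, hg', hg'',
    hg'''] at hode'
  have h5 : C (12 * c) * g ^ 5 = 0 := by
    rw [map_mul, map_ofNat]
    linear_combination hode - hode'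
  have h12 := congrArg (coeff 5) h5
  rw [coeff_C_mul, coeff_pow_self (hodd 0 (by decide)), h1, one_pow, mul_one, map_zero] at h12
  have h12' : (12 : ℕ) • c = 0 := by rwa [nsmul_eq_mul, Nat.cast_ofNat]
  exact (smul_eq_zero.mp h12').resolve_left (by norm_num)

theorem derivative_derivative_mul_eq {g : R⟦X⟧} {b : R} (hodd : ∀ n, Even n → coeff n g = 0)
    (h1 : coeff 1 g = 1)
    (hode : 6 * d⁄dX R g = -6 * C b * d⁄dX R g * g ^ 2 - 6 * d⁄dX R (d⁄dX R g) * d⁄dX R g * g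
      + 6 * d⁄dX R g ^ 3 + d⁄dX R (d⁄dX R (d⁄dX R g)) * g ^ 2) :
    d⁄dX R (d⁄dX R g) * g = 2 * d⁄dX R g ^ 2 - 2 - 6 * C b * g ^ 2 := by
  have hg := evalNegHom_eq_neg hodd
  have hg' := evalNegHom_derivative_of_eq_neg hg
  have hg'' := evalNegHom_derivative_of_eq hg'
  set D := d⁄dX R (d⁄dX R g) * g - 2 * d⁄dX R g ^ 2 + 2 + 6 * C b * g ^ 2
  have hD3 : coeff 3 D = 0 := by
    refine coeff_eq_zero_of_evalNegHom_eq ?_ (by decide)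
    simp only [D, map_add, map_sub, map_mul, map_pow, map_ofNat, evalNegHom_C, hg, hg', hg'']
    ring
  have hDode : d⁄dX R D * g = (3 : ℕ) * (d⁄dX R g * D) := by
    simp only [D, map_add, map_sub, Derivation.leibniz, Derivation.leibniz_pow, smul_eq_mul,
      nsmul_eq_mul, derivative_C, derivative_ofNat]
    push_cast
    linear_combination (-1 : R⟦X⟧) * hode
  linear_combination eq_zero_of_derivative_mul_eq (hodd 0 (by decide)) h1 hD3 hDode

theorem exists_sq_derivative_eq {g : R⟦X⟧} {a : R} (hg0 : coeff 0 g = 0) (h1 : coeff 1 g = 1)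
    (hD : d⁄dX R (d⁄dX R g) * g = 2 * d⁄dX R g ^ 2 - 2 - 2 * C a * g ^ 2) :
    ∃ ε : R, d⁄dX R g ^ 2 = 1 + 2 * C a * g ^ 2 + C ε * g ^ 4 := by
  set ε := coeff 4 (d⁄dX R g ^ 2 - 1 - 2 * C a * g ^ 2)
  refine ⟨ε, ?_⟩
  set F := d⁄dX R g ^ 2 - 1 - 2 * C a * g ^ 2 - C ε * g ^ 4 with hF
  have hF4 : coeff 4 F = 0 := by
    rw [hF, map_sub, coeff_C_mul, coeff_pow_self hg0, h1, one_pow, mul_one, sub_self]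
  have hFode : d⁄dX R F * g = (4 : ℕ) * (d⁄dX R g * F) := by
    simp only [F, map_sub, Derivation.leibniz, Derivation.leibniz_pow, smul_eq_mul,
      nsmul_eq_mul, derivative_C, derivative_ofNat, Derivation.map_one_eq_zero]
    push_cast
    linear_combination (2 * d⁄dX R g) * hD
  linear_combination eq_zero_of_derivative_mul_eq hg0 h1 hF4 hFode

end PowerSeries

/-- If `g` is an odd power series with linear coefficient `1` over a commutative
`ℚ`-algebra, `a = 3·(coefficient of X³ in g)`, and the two-variable rigidity identity
holds in `R⟦y,z⟧`, then `c = 0` and `(g')² = 1 + 2a·g² + ε·g⁴` for some `ε ∈ R`. -/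
theorem statement0 {R : Type*} [CommRing R] [Algebra ℚ R] (c : R) (g : PowerSeries R)
    (hodd : ∀ n, Even n → PowerSeries.coeff (R := R) n g = 0)
    (h1 : PowerSeries.coeff (R := R) 1 g = 1)
    (a : R) (ha : a = 3 * PowerSeries.coeff (R := R) 3 g)
    (heq :
      letI Y : MvPowerSeries (Fin 2) R := MvPowerSeries.X 0
      letI Z : MvPowerSeries (Fin 2) R := MvPowerSeries.X 1
      2 * MvPowerSeries.C (σ := Fin 2) (R := R) c * (substMv (Y + Z) g) ^ 2 * (substMv Y g) ^ 3
            * (substMv Z g) ^ 3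
          + 2 * substMv Z (d⁄dX R g) * (substMv Y g) ^ 3
          + 2 * substMv Y (d⁄dX R g) * (substMv Z g) ^ 3
        = substMv (Y + Z) g *
            (-(substMv Z (d⁄dX R (d⁄dX R g)) * (substMv Y g) ^ 2 * substMv Z g)
              - substMv Y (d⁄dX R (d⁄dX R g)) * (substMv Z g) ^ 2 * substMv Y g
              + 2 * (substMv Z (d⁄dX R g)) ^ 2 * (substMv Y g) ^ 2
              + 2 * (substMv Y (d⁄dX R g)) ^ 2 * (substMv Z g) ^ 2
              - 2 * substMv Y (d⁄dX R g) * substMv Z (d⁄dX R g)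
                  * substMv Y g * substMv Z g)) :
    c = 0 ∧ ∃ ε : R,
      (d⁄dX R g) ^ 2 = 1 + 2 * PowerSeries.C (R := R) a * g ^ 2 + PowerSeries.C (R := R) ε * g ^ 4 := by
  have : IsAddTorsionFree R := .of_module_rat R
  have h : RigidityEquation c g := heq
  have hc := h.const_eq_zero hodd h1
  have hode := h.ode hodd h1
  rw [hc, map_zero] at hode
  have hD := derivative_derivative_mul_eq hodd h1 (by linear_combination hode)
  refine ⟨hc, exists_sq_derivative_eq (hodd 0 (by decide)) h1 ?_⟩
  rw [ha, map_mul, map_ofNat]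
  linear_combination hD
end

section
/- Let R be a commutative ℚ-algebra, c ∈ R, and let g ∈ R⟦X⟧ be an odd formal power series with coefficient 1 in degree 1. Set a = 3·(coefficient of X³ in g). Suppose that in R⟦y,z⟧ the identity 2c·g(y+z)²·g(y)³·g(z)³ + 2·g'(z)·g(y)³ + 2·g'(y)·g(z)³ = g(y+z)·( −g''(z)·g(y)²·g(z) − g''(y)·g(z)²·g(y) + 2·g'(z)²·g(y)² + 2·g'(y)²·g(z)² − 2·g'(y)·g'(z)·g(y)·g(z) ) holds (notation as via substitution of y, z, y+z into g and its derivatives). Then, extracting the coefficient of z³, the one-variable identity 6c·g⁵ + 6·g' = −6·g''·g'·g − 2a·g²·g' + 6·(g')³ + g'''·g² holds in R⟦X⟧. -/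
/-!
Identify `R⟦y,z⟧` with `R⟦y⟧⟦z⟧`. Then `g(y)` is a constant, `g(z)` has constant coefficients,
and Taylor's formula reads `k! · [zᵏ] g(y + z) = g⁽ᵏ⁾(y)`. As `g = X + (a/3)·X³ + O(X⁵)` is odd,
three times the `z³`-coefficient of the two-variable identity is the claimed identity up to
multiples of `2·[z²] g(y + z) - g''` and `6·[z³] g(y + z) - g'''`, so no division is needed.
-/

open PowerSeries

open Finsupp

section

variable {R : Type*} [CommRing R]

def yzEmbedding : Fin 2 ↪ Option Unit := ⟨![some (), none], by decide⟩

noncomputable def zExpansion : MvPowerSeries (Fin 2) R →ₐ[R] PowerSeries (PowerSeries R) :=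
  (MvPowerSeries.optionEquivLeft Unit R).toAlgHom.comp (MvPowerSeries.rename yzEmbedding)

theorem coeff_coeff_zExpansion (h : MvPowerSeries (Fin 2) R) (n k : ℕ) :
    coeff n (coeff k (zExpansion h)) = MvPowerSeries.coeff (single 0 n + single 1 k) h := by
  have e : (single () n : Unit →₀ ℕ).optionElim k =
      embDomain yzEmbedding (single 0 n + single 1 k) := by
    ext i; rcases i with _ | _ <;> simp [yzEmbedding]
  rw [← MvPowerSeries.coeff_embDomain_rename, ← e, ← MvPowerSeries.coeff_coeff_optionEquivLeft]
  rfl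

theorem zExpansion_X_zero : zExpansion (MvPowerSeries.X 0 : MvPowerSeries (Fin 2) R) = C X := by
  simp [zExpansion, yzEmbedding, MvPowerSeries.rename_X]
  rfl

theorem zExpansion_X_one : zExpansion (MvPowerSeries.X 1 : MvPowerSeries (Fin 2) R) = X := by
  simp [zExpansion, yzEmbedding, MvPowerSeries.rename_X]

theorem coeff_coeff_zExpansion_substMv (h : MvPowerSeries (Fin 2) R) (f : PowerSeries R)
    (n k : ℕ) :
    coeff n (coeff k (zExpansion (substMv h f))) =
      ∑ m ∈ Finset.range (n + k + 1), coeff m f * coeff n (coeff k (zExpansion h ^ m)) := by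
  simp only [coeff_coeff_zExpansion, ← map_pow]
  have hdeg : ((single (0 : Fin 2) n + single 1 k).sum fun _ m => m) = n + k := by
    simp [Finsupp.sum_add_index', Finsupp.sum_single_index]
  simp only [substMv, MvPowerSeries.coeff_apply, hdeg]

theorem zExpansion_substMv_X_zero (f : PowerSeries R) :
    zExpansion (substMv (MvPowerSeries.X 0) f) = C f := by
  ext k n
  rw [coeff_coeff_zExpansion_substMv, zExpansion_X_zero, coeff_C]
  simp only [← map_pow, coeff_C]
  split_ifs with hk
  · simp [hk]
  · simp

theorem zExpansion_substMv_X_one (f : PowerSeries R) :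
    zExpansion (substMv (MvPowerSeries.X 1) f) = map C f := by
  ext k n
  rw [coeff_coeff_zExpansion_substMv, zExpansion_X_one, coeff_map, coeff_C]
  simp only [coeff_X_pow, apply_ite (coeff n), coeff_one, map_zero, mul_ite, mul_one, mul_zero]
  rw [Finset.sum_ite_eq, if_pos (by simp)]

theorem coeff_coeff_X_add_C_X_pow (n k m : ℕ) :
    coeff n (coeff k ((X + C X : PowerSeries (PowerSeries R)) ^ m)) =
      if n + k = m then (m.choose k : R) else 0 := by
  rw [show (X + C X : PowerSeries (PowerSeries R)) =
      ((Polynomial.X + Polynomial.C X : Polynomial (PowerSeries R)) : PowerSeries (PowerSeries R))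
      by simp, ← Polynomial.coe_pow, Polynomial.coeff_coe, Polynomial.coeff_X_add_C_pow,
    ← map_natCast C, coeff_mul_C, coeff_X_pow]
  by_cases hkm : k ≤ m
  · simp only [ite_mul, one_mul, zero_mul]
    congr 1
    exact propext (by omega)
  · rw [Nat.choose_eq_zero_of_lt (by omega)]
    simp

theorem factorial_mul_coeff_zExpansion_substMv_X_add_X (f : PowerSeries R) (k : ℕ) :
    (k.factorial : PowerSeries R) *
        coeff k (zExpansion (substMv (MvPowerSeries.X 0 + MvPowerSeries.X 1) f)) =
      (d⁄dX R)^[k] f := by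
  ext n
  rw [coeff_iterate_derivative, ← map_natCast C, coeff_C_mul, coeff_coeff_zExpansion_substMv,
    map_add, zExpansion_X_zero, zExpansion_X_one, add_comm (C X)]
  simp only [coeff_coeff_X_add_C_X_pow, mul_ite, mul_zero]
  rw [Finset.sum_ite_eq, if_pos (by simp), Nat.ascFactorial_eq_factorial_mul_choose]
  push_cast
  ring

theorem zExpansion_C (r : R) :
    zExpansion (MvPowerSeries.C r : MvPowerSeries (Fin 2) R) = C (C r) := by
  simp [zExpansion]
  rfl

end

theorem statement1_general {R : Type*} [CommRing R] (c : R) (g : PowerSeries R)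
    (hodd : ∀ n, Even n → PowerSeries.coeff (R := R) n g = 0)
    (h1 : PowerSeries.coeff (R := R) 1 g = 1)
    (a : R) (ha : a = 3 * PowerSeries.coeff (R := R) 3 g)
    (heq :
      letI Y : MvPowerSeries (Fin 2) R := MvPowerSeries.X 0
      letI Z : MvPowerSeries (Fin 2) R := MvPowerSeries.X 1
      2 * MvPowerSeries.C (σ := Fin 2) (R := R) c * (substMv (Y + Z) g) ^ 2 * (substMv Y g) ^ 3
            * (substMv Z g) ^ 3
          + 2 * substMv Z (d⁄dX R g) * (substMv Y g) ^ 3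
          + 2 * substMv Y (d⁄dX R g) * (substMv Z g) ^ 3
        = substMv (Y + Z) g *
            (-(substMv Z (d⁄dX R (d⁄dX R g)) * (substMv Y g) ^ 2 * substMv Z g)
              - substMv Y (d⁄dX R (d⁄dX R g)) * (substMv Z g) ^ 2 * substMv Y g
              + 2 * (substMv Z (d⁄dX R g)) ^ 2 * (substMv Y g) ^ 2
              + 2 * (substMv Y (d⁄dX R g)) ^ 2 * (substMv Z g) ^ 2
              - 2 * substMv Y (d⁄dX R g) * substMv Z (d⁄dX R g)
                  * substMv Y g * substMv Z g)) :
    6 * PowerSeries.C (R := R) c * g ^ 5 + 6 * d⁄dX R g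
      = -(6 * d⁄dX R (d⁄dX R g) * d⁄dX R g * g)
        - 2 * PowerSeries.C (R := R) a * g ^ 2 * d⁄dX R g
        + 6 * (d⁄dX R g) ^ 3
        + d⁄dX R (d⁄dX R (d⁄dX R g)) * g ^ 2 := by
  have H := congrArg (fun h => coeff 3 (zExpansion h)) heq
  simp only [map_add, map_sub, map_mul, map_neg, map_pow, map_ofNat, zExpansion_C,
    zExpansion_substMv_X_zero, zExpansion_substMv_X_one] at H
  -- numerals have no `coeff` lemma of their own, unlike `C`
  rw [show (2 : R⟦X⟧⟦X⟧) = C 2 from (map_ofNat C 2).symm] at H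
  have hG := factorial_mul_coeff_zExpansion_substMv_X_add_X g
  set G := zExpansion (substMv (MvPowerSeries.X 0 + MvPowerSeries.X 1) g)
  simp only [pow_succ, pow_zero, one_mul, coeff_mul, map_add, map_sub, map_neg,
    Finset.Nat.sum_antidiagonal_eq_sum_range_succ_mk, Finset.sum_range_succ, Finset.sum_range_zero,
    Nat.reduceSub, coeff_map, coeff_C, coeff_derivative] at H
  norm_num [hodd 0 (by decide), hodd 2 (by decide), hodd 4 (by decide), h1] at H
  have hG0 : constantCoeff G = g := by simpa using hG 0
  have hG1 : coeff 1 G = d⁄dX R g := by simpa using hG 1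
  have hG2 : 2 * coeff 2 G = d⁄dX R (d⁄dX R g) := by simpa using hG 2
  have hG3 : 6 * coeff 3 G = d⁄dX R (d⁄dX R (d⁄dX R g)) := by simpa [Nat.factorial] using hG 3
  rw [hG0, hG1, map_ofNat, map_ofNat] at H
  rw [ha, map_mul, map_ofNat]
  linear_combination 3 * H - 3 * d⁄dX R g * g * hG2 + g ^ 2 * hG3

/-- Extracting the coefficient of `z³` in the two-variable rigidity identity yields the
one-variable differential identity `6c·g⁵ + 6·g' = −6·g''·g'·g − 2a·g²·g' + 6·(g')³ + g'''·g²`. -/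
theorem statement1 {R : Type*} [CommRing R] [Algebra ℚ R] (c : R) (g : PowerSeries R)
    (hodd : ∀ n, Even n → PowerSeries.coeff (R := R) n g = 0)
    (h1 : PowerSeries.coeff (R := R) 1 g = 1)
    (a : R) (ha : a = 3 * PowerSeries.coeff (R := R) 3 g)
    (heq :
      letI Y : MvPowerSeries (Fin 2) R := MvPowerSeries.X 0
      letI Z : MvPowerSeries (Fin 2) R := MvPowerSeries.X 1
      2 * MvPowerSeries.C (σ := Fin 2) (R := R) c * (substMv (Y + Z) g) ^ 2 * (substMv Y g) ^ 3
            * (substMv Z g) ^ 3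
          + 2 * substMv Z (d⁄dX R g) * (substMv Y g) ^ 3
          + 2 * substMv Y (d⁄dX R g) * (substMv Z g) ^ 3
        = substMv (Y + Z) g *
            (-(substMv Z (d⁄dX R (d⁄dX R g)) * (substMv Y g) ^ 2 * substMv Z g)
              - substMv Y (d⁄dX R (d⁄dX R g)) * (substMv Z g) ^ 2 * substMv Y g
              + 2 * (substMv Z (d⁄dX R g)) ^ 2 * (substMv Y g) ^ 2
              + 2 * (substMv Y (d⁄dX R g)) ^ 2 * (substMv Z g) ^ 2
              - 2 * substMv Y (d⁄dX R g) * substMv Z (d⁄dX R g)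
                  * substMv Y g * substMv Z g)) :
    6 * PowerSeries.C (R := R) c * g ^ 5 + 6 * d⁄dX R g
      = -(6 * d⁄dX R (d⁄dX R g) * d⁄dX R g * g)
        - 2 * PowerSeries.C (R := R) a * g ^ 2 * d⁄dX R g
        + 6 * (d⁄dX R g) ^ 3
        + d⁄dX R (d⁄dX R (d⁄dX R g)) * g ^ 2 :=
  statement1_general c g hodd h1 a ha heq
end

section
/- Let R be a commutative ℚ-algebra, c, a ∈ R, and let g ∈ R⟦X⟧ be an odd formal power series with coefficient 1 in degree 1. If 6c·g⁵ + 6·g' = −6·g''·g'·g − 2a·g²·g' + 6·(g')³ + g'''·g² holds in R⟦X⟧, then c = 0. -/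
open PowerSeries

/-!
Apply the substitution `X ↦ -X`. It sends the odd series `g` to `-g` and anticommutes with `d⁄dX`,
so it fixes `g'`, `g'''`, `6 g'` and every term of the right-hand side, but negates `6 c g⁵`.
Subtracting the two equations gives `12 c g⁵ = 0`, whose `X⁵`-coefficient is `12 c`.
-/

namespace PowerSeries

variable {R : Type*} [CommRing R]

theorem rescale_C (a r : R) : rescale a (C r) = C r := by
  ext n
  rw [coeff_rescale, coeff_C]
  split_ifs with hn <;> simp [hn]

theorem derivative_rescale (a : R) (f : R⟦X⟧) :
    d⁄dX R (rescale a f) = C a * rescale a (d⁄dX R f) := by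
  ext n
  simp only [coeff_derivative, coeff_rescale, coeff_C_mul]
  ring

theorem evalNegHom_derivative (f : R⟦X⟧) : evalNegHom (d⁄dX R f) = -d⁄dX R (evalNegHom f) := by
  simp [evalNegHom, derivative_rescale]

theorem evalNegHom_eq_neg_of_odd {f : R⟦X⟧} (hf : ∀ n, Even n → coeff n f = 0) :
    evalNegHom f = -f := by
  ext n
  rcases n.even_or_odd with hn | hn
  · simp [evalNegHom, coeff_rescale, hf n hn]
  · simp [evalNegHom, coeff_rescale, hn.neg_one_pow]

theorem coeff_pow_self_of_constantCoeff_eq_zero {f : R⟦X⟧} (hf : constantCoeff f = 0) (n : ℕ) :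
    coeff n (f ^ n) = coeff 1 f ^ n := by
  obtain ⟨h, rfl⟩ := X_dvd_iff.mpr hf
  simpa [mul_pow] using coeff_X_pow_mul (h ^ n) n 0

end PowerSeries

/-- If `g` is an odd power series with linear coefficient `1` over a commutative
`ℚ`-algebra and `6c·g⁵ + 6·g' = −6·g''·g'·g − 2a·g²·g' + 6·(g')³ + g'''·g²`
holds in `R⟦X⟧`, then `c = 0`. -/
theorem statement2 {R : Type*} [CommRing R] [Algebra ℚ R] (c a : R) (g : PowerSeries R)
    (hodd : ∀ n, Even n → PowerSeries.coeff n g = 0)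
    (h1 : PowerSeries.coeff 1 g = 1)
    (heq : 6 * PowerSeries.C c * g ^ 5 + 6 * d⁄dX R g
      = -(6 * d⁄dX R (d⁄dX R g) * d⁄dX R g * g)
        - 2 * PowerSeries.C a * g ^ 2 * d⁄dX R g
        + 6 * (d⁄dX R g) ^ 3
        + d⁄dX R (d⁄dX R (d⁄dX R g)) * g ^ 2) :
    c = 0 := by
  have hg : evalNegHom g = -g := evalNegHom_eq_neg_of_odd hodd
  have hg' : evalNegHom (d⁄dX R g) = d⁄dX R g := by
    rw [evalNegHom_derivative, hg, map_neg, neg_neg]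
  have hg'' : evalNegHom (d⁄dX R (d⁄dX R g)) = -d⁄dX R (d⁄dX R g) := by
    rw [evalNegHom_derivative, hg']
  have hg''' : evalNegHom (d⁄dX R (d⁄dX R (d⁄dX R g))) = d⁄dX R (d⁄dX R (d⁄dX R g)) := by
    rw [evalNegHom_derivative, hg'', map_neg, neg_neg]
  have hC (r : R) : evalNegHom (C r) = C r := rescale_C _ _
  have heqσ := congrArg evalNegHom heq
  simp only [map_add, map_sub, map_neg, map_mul, map_pow, map_ofNat, hg, hg', hg'', hg''', hC]
    at heqσ
  have h12 : C (12 * c) * g ^ 5 = 0 := by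
    rw [map_mul, map_ofNat]
    linear_combination heq - heqσ
  have h12c : (12 : R) * c = 0 := by
    have h5 := congrArg (coeff 5) h12
    rwa [coeff_C_mul, coeff_pow_self_of_constantCoeff_eq_zero (by simpa using hodd 0 .zero),
      h1, one_pow, mul_one, map_zero] at h5
  have h12c_smul : (12 : ℚ) • c = 0 := by rwa [Algebra.smul_def, map_ofNat]
  exact (smul_eq_zero.mp h12c_smul).resolve_left (by norm_num)
end

section
/- Let R be a commutative ℚ-algebra, a ∈ R, and let g ∈ R⟦X⟧ be an odd formal power series with coefficient 1 in degree 1. If g'·(6 + 6·g·g'' + 2a·g² − 6·(g')²) = g'''·g² holds in R⟦X⟧, then there exists ε ∈ R such that (g')² = 1 + 2a·g² + ε·g⁴. -/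
/-!
Put `P = g·g'' − 2·(g')² + 2 + 2a·g²`. The hypothesis says exactly `g·P' = 3·g'·P`, and `P` has no
`X³` term because `g` is odd. Since `g = X + O(X²)`, an equation `g·Q' = c·g'·Q` determines `Q`
from its coefficient in degree `c`: if `Q = Xⁿ·S`, comparing coefficients of `Xⁿ` gives
`n·S(0) = c·S(0)`. Hence `P = 0`, i.e. `g·g'' = 2·(g')² − 2 − 2a·g²`, and with this the series
`Q = (g')² − 1 − 2a·g² − ε·g⁴` satisfies `g·Q' = 4·g'·Q`; choosing `ε` to kill the `X⁴` coefficient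
of `Q` gives `Q = 0`.
-/

open PowerSeries

namespace PowerSeries

variable {R : Type*} [CommRing R]

theorem X_mul_derivative_X_pow (n : ℕ) :
    (X : R⟦X⟧) * d⁄dX R (X ^ n : R⟦X⟧) = (n : R⟦X⟧) * X ^ n := by
  rcases n with _ | n
  · simp
  · rw [derivative_pow, derivative_X, Nat.add_sub_cancel]
    ring

theorem derivative_two : d⁄dX R (2 : R⟦X⟧) = 0 :=
  mod_cast Derivation.map_natCast _ 2

theorem coeff_self_pow {g : R⟦X⟧} (hg : constantCoeff g = 0) (n : ℕ) :
    coeff n (g ^ n) = coeff 1 g ^ n := by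
  obtain ⟨u, rfl⟩ := X_dvd_iff.mpr hg
  rw [mul_pow, coeff_X_pow_mul', if_pos le_rfl, Nat.sub_self, coeff_zero_eq_constantCoeff_apply,
    map_pow, coeff_succ_X_mul, coeff_zero_eq_constantCoeff_apply]

theorem eq_zero_of_mul_derivative_eq_natCast_mul [IsAddTorsionFree R] {g Q : R⟦X⟧}
    (hg0 : constantCoeff g = 0) (hg1 : coeff 1 g = 1) {c : ℕ} (hc : coeff c Q = 0)
    (h : g * d⁄dX R Q = c * d⁄dX R g * Q) : Q = 0 := by
  obtain ⟨u, rfl⟩ := X_dvd_iff.mpr hg0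
  rw [coeff_succ_X_mul, coeff_zero_eq_constantCoeff_apply] at hg1
  suffices ∀ n, X ^ n ∣ Q from ext fun n ↦ X_pow_dvd_iff.mp (this (n + 1)) n n.lt_succ_self
  intro n
  induction n with
  | zero => simp
  | succ n ih =>
    obtain ⟨S, rfl⟩ := ih
    rw [pow_succ]
    refine mul_dvd_mul_left _ (X_dvd_iff.mpr ?_)
    have hL : X * u * d⁄dX R (X ^ n * S) = X ^ n * ((n : R⟦X⟧) * u * S + X * u * d⁄dX R S) := by
      rw [Derivation.leibniz, smul_eq_mul, smul_eq_mul]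
      linear_combination (u * S) * X_mul_derivative_X_pow (R := R) n
    have hR : (c : R⟦X⟧) * d⁄dX R (X * u) * (X ^ n * S)
        = X ^ n * ((c : R⟦X⟧) * d⁄dX R (X * u) * S) := by
      ring
    have hn := congrArg (coeff n) h
    rw [hL, hR] at hn
    simp only [coeff_X_pow_mul', le_refl, ↓reduceIte, tsub_self, coeff_zero_eq_constantCoeff,
      map_add, map_mul, map_natCast, hg1, mul_one, constantCoeff_X, zero_mul, add_zero,
      Derivation.leibniz, smul_eq_mul, derivative_X, zero_add] at hn
    obtain rfl | hnc := eq_or_ne n c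
    · simpa [coeff_X_pow_mul'] using hc
    have hcancel : ((n : ℤ) - c) • constantCoeff S = ((n : ℤ) - c) • 0 := by
      rw [smul_zero, sub_smul, natCast_zsmul, natCast_zsmul, nsmul_eq_mul, nsmul_eq_mul, hn,
        sub_self]
    exact zsmul_right_injective (sub_ne_zero.mpr (Int.ofNat_inj.not.mpr hnc)) hcancel

end PowerSeries

theorem mul_derivative_derivative_eq_of_odd {R : Type*} [CommRing R] [IsAddTorsionFree R] {a : R}
    {g : R⟦X⟧} (hodd : ∀ n, Even n → coeff n g = 0) (h1 : coeff 1 g = 1)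
    (heq : d⁄dX R g * (6 + 6 * g * d⁄dX R (d⁄dX R g) + 2 * C a * g ^ 2 - 6 * (d⁄dX R g) ^ 2)
      = d⁄dX R (d⁄dX R (d⁄dX R g)) * g ^ 2) :
    g * d⁄dX R (d⁄dX R g) = 2 * (d⁄dX R g) ^ 2 - 2 - 2 * C a * g ^ 2 := by
  have hg0 : constantCoeff g = 0 := by simpa using hodd 0 Even.zero
  have hP3 : coeff 3 (g * d⁄dX R (d⁄dX R g) - 2 * (d⁄dX R g) ^ 2 + 2 + 2 * C a * g ^ 2) = 0 := by
    rw [show (2 : R⟦X⟧) = C 2 from (map_ofNat C 2).symm]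
    simp [pow_two, coeff_mul, Finset.Nat.sum_antidiagonal_eq_sum_range_succ_mk,
      Finset.sum_range_succ, coeff_derivative, hg0, hodd 2 even_two, hodd 4 (by decide), h1]
  have hP := eq_zero_of_mul_derivative_eq_natCast_mul hg0 h1 hP3 (by
    simp only [map_add, map_sub, Derivation.leibniz, Derivation.leibniz_pow, derivative_C,
      smul_eq_mul, derivative_two]
    linear_combination -heq)
  linear_combination hP

/-- If `g` is an odd power series with linear coefficient `1` over a commutative
`ℚ`-algebra and `g'·(6 + 6·g·g'' + 2a·g² − 6·(g')²) = g'''·g²` holds in `R⟦X⟧`,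
then `(g')² = 1 + 2a·g² + ε·g⁴` for some `ε ∈ R`. -/
theorem statement3 {R : Type*} [CommRing R] [Algebra ℚ R] (a : R) (g : PowerSeries R)
    (hodd : ∀ n, Even n → PowerSeries.coeff n g = 0)
    (h1 : PowerSeries.coeff 1 g = 1)
    (heq : d⁄dX R g * (6 + 6 * g * d⁄dX R (d⁄dX R g) + 2 * PowerSeries.C a * g ^ 2
        - 6 * (d⁄dX R g) ^ 2)
      = d⁄dX R (d⁄dX R (d⁄dX R g)) * g ^ 2) :
    ∃ ε : R,
      (d⁄dX R g) ^ 2 = 1 + 2 * PowerSeries.C a * g ^ 2 + PowerSeries.C ε * g ^ 4 := by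
  have : IsAddTorsionFree R := .of_module_rat R
  have hg0 : constantCoeff g = 0 := by simpa using hodd 0 Even.zero
  have hg'' := mul_derivative_derivative_eq_of_odd hodd h1 heq
  set ε := coeff 4 ((d⁄dX R g) ^ 2 - 1 - 2 * C a * g ^ 2)
  have hQ4 : coeff 4 ((d⁄dX R g) ^ 2 - 1 - 2 * C a * g ^ 2 - C ε * g ^ 4) = 0 := by
    rw [map_sub, coeff_C_mul, coeff_self_pow hg0, h1, one_pow, mul_one, sub_self]
  have hQ := eq_zero_of_mul_derivative_eq_natCast_mul hg0 h1 hQ4 (by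
    simp only [map_sub, Derivation.leibniz, Derivation.leibniz_pow, derivative_C, smul_eq_mul,
      Derivation.map_one_eq_zero, derivative_two]
    linear_combination (2 * d⁄dX R g) * hg'')
  exact ⟨ε, by linear_combination hQ⟩
end

section
/- Let R be a commutative ℚ-algebra and let δ, ε ∈ R. Then there exists a unique formal power series f ∈ R⟦X⟧ with constant term 0 and coefficient 1 in degree 1 satisfying the differential equation (f')² = 1 − 2δ·f² + ε·f⁴ in R⟦X⟧. (This power series is the formal elliptic sine sn(x) when R = ℚ[δ,ε].) -/
/-!
Differentiating `(f')² = Q(f)` gives `2 f' f'' = Q'(f) f'`. As `f'(0) = 1` is a unit, the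
first-order equation is equivalent, given the initial values, to the second-order equation
`f'' = P(f)` with `2 P = Q'`. Comparing coefficients of `Xⁿ` there expresses
`(n + 1)(n + 2) fₙ₊₂` through `f₀, …, fₙ`, and in a `ℚ`-algebra this recursion has exactly one
solution with prescribed `f₀` and `f₁`.
-/

open PowerSeries

section RatAlgebra

variable {R : Type*} [Semiring R] [Algebra ℚ R]

theorem isUnit_natCast_of_ne_zero {n : ℕ} (hn : n ≠ 0) : IsUnit (n : R) := by
  simpa using (isUnit_iff_ne_zero.2 (Nat.cast_ne_zero.2 hn : (n : ℚ) ≠ 0)).map (algebraMap ℚ R)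

theorem isUnit_two : IsUnit (2 : R) := by
  simpa using isUnit_natCast_of_ne_zero (R := R) two_ne_zero

end RatAlgebra

namespace PowerSeries

variable {R : Type*} [CommRing R]

theorem constantCoeff_aeval (f : R⟦X⟧) (Q : Polynomial R) :
    constantCoeff (Polynomial.aeval f Q) = Q.eval (constantCoeff f) := by
  induction Q using Polynomial.induction_on with
  | C a => simp
  | add p q hp hq => simp [hp, hq]
  | monomial n a _ => simp [pow_succ]

theorem coeff_derivative_derivative (f : R⟦X⟧) (n : ℕ) :
    coeff n (d⁄dX R (d⁄dX R f)) = ((n + 1).ascFactorial 2 : ℕ) * coeff (n + 2) f :=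
  coeff_iterate_derivative f 2 n

-- Equivalently: the `n`-th coefficient of `F f` depends only on the coefficients of `f` up to `n`.
def IsCausal (F : R⟦X⟧ → R⟦X⟧) : Prop :=
  ∀ n f g, X ^ n ∣ f - g → X ^ n ∣ F f - F g

theorem isCausal_aeval (P : Polynomial R) : IsCausal fun f : R⟦X⟧ => Polynomial.aeval f P := by
  intro n f g h
  simpa only [Polynomial.aeval_def, Polynomial.eval₂_eq_eval_map] using
    h.trans (Polynomial.sub_dvd_eval_sub f g _)

theorem IsCausal.coeff_eq {F : R⟦X⟧ → R⟦X⟧} (hF : IsCausal F) {n : ℕ} {f g : R⟦X⟧}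
    (h : ∀ k ≤ n, coeff k f = coeff k g) : coeff n (F f) = coeff n (F g) := by
  have hfg : X ^ (n + 1) ∣ f - g :=
    X_pow_dvd_iff.2 fun k hk => by rw [map_sub, h k (by omega), sub_self]
  exact sub_eq_zero.1 <| by simpa using X_pow_dvd_iff.1 (hF _ f g hfg) n n.lt_succ_self

-- The coefficient of `Xⁿ` in `f'' = F f` is `(n + 1)(n + 2) fₙ₊₂ = [F f]ₙ`, and for causal `F`
-- the right-hand side does not change when `f` is truncated after `Xⁿ`.
noncomputable def solutionCoeff (F : R⟦X⟧ → R⟦X⟧) (c₀ c₁ : R) : ℕ → R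
  | 0 => c₀
  | 1 => c₁
  | n + 2 => Ring.inverse ((n + 1).ascFactorial 2 : R) *
      coeff n (F (mk fun k => if k ≤ n then solutionCoeff F c₀ c₁ k else 0))

section RatAlgebra

variable [Algebra ℚ R]

theorem derivative_derivative_mk_solutionCoeff {F : R⟦X⟧ → R⟦X⟧} (hF : IsCausal F) (c₀ c₁ : R) :
    d⁄dX R (d⁄dX R (mk (solutionCoeff F c₀ c₁))) = F (mk (solutionCoeff F c₀ c₁)) := by
  ext n
  rw [coeff_derivative_derivative, coeff_mk, solutionCoeff, ← mul_assoc,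
    Ring.mul_inverse_cancel _ (isUnit_natCast_of_ne_zero (Nat.ascFactorial_pos n 2).ne'), one_mul]
  exact hF.coeff_eq fun k hk => by simp [hk]

theorem eq_of_derivative_derivative_eq {F : R⟦X⟧ → R⟦X⟧} (hF : IsCausal F) {f g : R⟦X⟧}
    (h₀ : constantCoeff f = constantCoeff g) (h₁ : coeff 1 f = coeff 1 g)
    (hf : d⁄dX R (d⁄dX R f) = F f) (hg : d⁄dX R (d⁄dX R g) = F g) : f = g := by
  ext n
  induction n using Nat.strong_induction_on with
  | _ n ih =>
    rcases n with _ | _ | n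
    · simpa using h₀
    · exact h₁
    · refine (isUnit_natCast_of_ne_zero (Nat.ascFactorial_pos n 2).ne').mul_left_cancel ?_
      rw [← coeff_derivative_derivative, ← coeff_derivative_derivative, hf, hg]
      exact hF.coeff_eq fun k hk => ih k (by omega)

theorem existsUnique_derivative_derivative_eq {F : R⟦X⟧ → R⟦X⟧} (hF : IsCausal F) (c₀ c₁ : R) :
    ∃! f : R⟦X⟧, constantCoeff f = c₀ ∧ coeff 1 f = c₁ ∧ d⁄dX R (d⁄dX R f) = F f := by
  refine ⟨mk (solutionCoeff F c₀ c₁), ⟨by simp [solutionCoeff], by simp [solutionCoeff],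
    derivative_derivative_mk_solutionCoeff hF c₀ c₁⟩, ?_⟩
  rintro g ⟨hg₀, hg₁, hg⟩
  refine eq_of_derivative_derivative_eq hF ?_ ?_ hg
    (derivative_derivative_mk_solutionCoeff hF c₀ c₁) <;>
  simp [hg₀, hg₁, ← coeff_zero_eq_constantCoeff_apply, solutionCoeff]

theorem sq_derivative_eq_aeval_iff {P Q : Polynomial R} (hPQ : 2 * P = Polynomial.derivative Q)
    {f : R⟦X⟧} (hu : IsUnit (coeff 1 f)) (h₀ : coeff 1 f ^ 2 = Q.eval (constantCoeff f)) :
    (d⁄dX R f) ^ 2 = Polynomial.aeval f Q ↔ d⁄dX R (d⁄dX R f) = Polynomial.aeval f P := by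
  have hD : d⁄dX R ((d⁄dX R f) ^ 2 - Polynomial.aeval f Q) =
      2 * d⁄dX R f * (d⁄dX R (d⁄dX R f) - Polynomial.aeval f P) := by
    rw [map_sub, derivative_pow, Derivation.map_aeval, ← hPQ, map_mul, map_ofNat, smul_eq_mul]
    ring
  have hc : constantCoeff (d⁄dX R f) = coeff 1 f := by
    simp [← coeff_zero_eq_constantCoeff_apply, coeff_derivative]
  constructor
  · intro h
    have hunit : IsUnit (2 * d⁄dX R f) :=
      isUnit_two.mul (isUnit_iff_constantCoeff.2 (hc ▸ hu))
    rw [h, sub_self, map_zero, eq_comm, hunit.mul_right_eq_zero] at hD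
    exact sub_eq_zero.1 hD
  · intro h
    have : IsAddTorsionFree R := .of_module_rat R
    refine sub_eq_zero.1 (derivative.ext (g := 0) ?_ ?_)
    · rw [hD, h, sub_self, mul_zero, map_zero]
    · simp [constantCoeff_aeval, hc, h₀]

theorem existsUnique_sq_derivative_eq_aeval (Q : Polynomial R) {c₀ c₁ : R} (hc₁ : IsUnit c₁)
    (hQ : c₁ ^ 2 = Q.eval c₀) :
    ∃! f : R⟦X⟧, constantCoeff f = c₀ ∧ coeff 1 f = c₁ ∧ (d⁄dX R f) ^ 2 = Polynomial.aeval f Q := by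
  obtain ⟨P, hPQ⟩ := (isUnit_two.dvd : (2 : Polynomial R) ∣ Polynomial.derivative Q)
  refine (existsUnique_congr fun f => and_congr_right fun hf₀ => and_congr_right fun hf₁ => ?_).2
    (existsUnique_derivative_derivative_eq (isCausal_aeval P) c₀ c₁)
  exact sq_derivative_eq_aeval_iff hPQ.symm (hf₁ ▸ hc₁) (by rw [hf₁, hf₀, hQ])

end RatAlgebra

end PowerSeries

/-- Over a commutative `ℚ`-algebra there is a unique formal power series `f` with
constant term `0` and linear coefficient `1` satisfying `(f')² = 1 − 2δ·f² + ε·f⁴`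
(the formal elliptic sine). -/
theorem statement7 {R : Type*} [CommRing R] [Algebra ℚ R] (δ ε : R) :
    ∃! f : PowerSeries R,
      PowerSeries.constantCoeff f = 0 ∧ PowerSeries.coeff 1 f = 1 ∧
        (d⁄dX R f) ^ 2 = 1 - 2 * PowerSeries.C δ * f ^ 2 + PowerSeries.C ε * f ^ 4 := by
  set Q : Polynomial R :=
    1 - 2 * Polynomial.C δ * Polynomial.X ^ 2 + Polynomial.C ε * Polynomial.X ^ 4
  have hQ (f : R⟦X⟧) : Polynomial.aeval f Q = 1 - 2 * C δ * f ^ 2 + C ε * f ^ 4 := by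
    simp [Q, map_ofNat]
  simpa only [hQ] using existsUnique_sq_derivative_eq_aeval Q isUnit_one (by simp [Q])
end
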